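/- Let φ: X → P^{n−1} be a surjective proper morphism from a normal projective variety over an algebraically closed field, such that every fiber over a codimension-1 point of P^{n−1} is irreducible outside a codimension-2 subset, and suppose the irreducible components γ_i of the non-smooth locus of φ in codimension 1 are hypersurfaces of degrees a_i. Then the kernel of the restriction map Cl(X) → Pic(C_η), where C_η is the generic fiber, contains the subgroup generated by φ^* O_{P^{n−1}}(a) with a = gcd{a_i}, and every divisor class supported on fibers of φ lies in this subgroup. -/

import Mathlib

/-!
The vertical prime divisors generate exactly the classes that die on the generic fiber, and
each of them is linearly equivalent to `aᵢ • H`. Since `gcd aᵢ` is a `ℤ`-combination of the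
`aᵢ`, the same combination of vertical divisors is equivalent to `a • H`; conversely a divisor
`∑ cᵢ Dᵢ` supported on fibers is equivalent to `(∑ cᵢ aᵢ) • H`, a multiple of `a • H`.
-/

theorem Finset.gcd_mem_of_forall_mem {R ι : Type*} [CommRing R] [IsDomain R]
    [IsPrincipalIdealRing R] [NormalizedGCDMonoid R] (I : Ideal R) {s : Finset ι} {f : ι → R}
    (h : ∀ i ∈ s, f i ∈ I) : s.gcd f ∈ I := by
  rw [Submodule.IsPrincipal.mem_iff_generator_dvd]
  exact Finset.dvd_gcd fun i hi => (Submodule.IsPrincipal.mem_iff_generator_dvd I).1 (h i hi)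

theorem Finset.gcd_zsmul_mem {M ι : Type*} [AddCommGroup M] (S : AddSubgroup M) (x : M)
    {s : Finset ι} {f : ι → ℤ} (h : ∀ i ∈ s, f i • x ∈ S) : s.gcd f • x ∈ S :=
  Finset.gcd_mem_of_forall_mem (S.comap (zmultiplesHom M x)).toIntSubmodule h

theorem Finsupp.map_eq_sum_zsmul_map_single {P N : Type*} [AddCommGroup N]
    (φ : (P →₀ ℤ) →+ N) {s : Finset P} {D : P →₀ ℤ} (hD : D.support ⊆ s) :
    φ D = ∑ p ∈ s, D p • φ (Finsupp.single p 1) := by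
  conv_lhs => rw [← Finsupp.sum_single D, Finsupp.sum_of_support_subset D hD _ (by simp)]
  simp only [map_sum, ← map_zsmul, Finsupp.smul_single_one]

theorem Finsupp.map_mem_zmultiples_gcd_zsmul {P N : Type*} [AddCommGroup N]
    (φ : (P →₀ ℤ) →+ N) {s : Finset P} (deg : P → ℤ) (y : N)
    (hφ : ∀ p ∈ s, φ (Finsupp.single p 1) = deg p • y) {D : P →₀ ℤ} (hD : D.support ⊆ s) :
    φ D ∈ AddSubgroup.zmultiples (s.gcd deg • y) := by
  obtain ⟨m, hm⟩ : s.gcd deg ∣ ∑ p ∈ s, D p * deg p :=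
    Finset.dvd_sum fun p hp => (Finset.gcd_dvd hp).mul_left _
  refine ⟨m, ?_⟩
  calc m • s.gcd deg • y = (∑ p ∈ s, D p * deg p) • y := by rw [hm, smul_smul, mul_comm]
    _ = ∑ p ∈ s, D p • φ (Finsupp.single p 1) := by
      simp only [Finset.sum_smul, mul_smul]
      exact Finset.sum_congr rfl fun p hp => by rw [hφ p hp]
    _ = φ D := (Finsupp.map_eq_sum_zsmul_map_single φ hD).symm

theorem stmt_12_general (P : Type) (Prin : AddSubgroup (P →₀ ℤ))
    (Vert : Finset P) (deg : P → ℕ)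
    (H : P →₀ ℤ)
    (hvert : ∀ p ∈ Vert, Finsupp.single p 1 - (deg p : ℤ) • H ∈ Prin) :
    (((Vert.gcd fun p => (deg p : ℤ)) : ℤ) • H ∈
      Prin ⊔ AddSubgroup.closure {D : P →₀ ℤ | ∃ p ∈ Vert, D = Finsupp.single p 1}) ∧
    (∀ D : P →₀ ℤ, (∀ p : P, p ∉ Vert → D p = 0) →
      (QuotientAddGroup.mk D : (P →₀ ℤ) ⧸ Prin) ∈
        AddSubgroup.zmultiples
          (QuotientAddGroup.mk (((Vert.gcd fun p => (deg p : ℤ)) : ℤ) • H) : (P →₀ ℤ) ⧸ Prin)) := by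
  constructor
  · refine Finset.gcd_zsmul_mem _ H fun p hp => ?_
    have hsingle : Finsupp.single p 1 ∈
        Prin ⊔ AddSubgroup.closure {D : P →₀ ℤ | ∃ p ∈ Vert, D = Finsupp.single p 1} :=
      AddSubgroup.mem_sup_right (AddSubgroup.subset_closure ⟨p, hp, rfl⟩)
    simpa using sub_mem hsingle (AddSubgroup.mem_sup_left (hvert p hp))
  · intro D hD
    have hsupp : D.support ⊆ Vert := fun p hp => by
      by_contra hpv
      exact Finsupp.mem_support_iff.mp hp (hD p hpv)
    have hclass : ∀ p ∈ Vert, QuotientAddGroup.mk' Prin (Finsupp.single p 1) =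
        (deg p : ℤ) • (H : (P →₀ ℤ) ⧸ Prin) := fun p hp => by
      rw [← QuotientAddGroup.mk_zsmul]
      exact QuotientAddGroup.eq_iff_sub_mem.mpr (hvert p hp)
    rw [QuotientAddGroup.mk_zsmul]
    exact Finsupp.map_mem_zmultiples_gcd_zsmul (QuotientAddGroup.mk' Prin) _ _ hclass hsupp

theorem stmt_12 (P : Type) (Prin : AddSubgroup (P →₀ ℤ))
    (Vert : Finset P) (deg : P → ℕ) (hdeg : ∀ p ∈ Vert, 1 ≤ deg p)
    (H : P →₀ ℤ)
    (hvert : ∀ p ∈ Vert, Finsupp.single p 1 - (deg p : ℤ) • H ∈ Prin) :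
    (((Vert.gcd fun p => (deg p : ℤ)) : ℤ) • H ∈
      Prin ⊔ AddSubgroup.closure {D : P →₀ ℤ | ∃ p ∈ Vert, D = Finsupp.single p 1}) ∧
    (∀ D : P →₀ ℤ, (∀ p : P, p ∉ Vert → D p = 0) →
      (QuotientAddGroup.mk D : (P →₀ ℤ) ⧸ Prin) ∈
        AddSubgroup.zmultiples
          (QuotientAddGroup.mk (((Vert.gcd fun p => (deg p : ℤ)) : ℤ) • H) : (P →₀ ℤ) ⧸ Prin)) :=
  stmt_12_general P Prin Vert deg H hvert
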